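/- Let A ⊆ B be unital C*-algebras with common unit and φ : A → B a unital completely positive map. Then for any unitaries u, v ∈ A, ‖φ(uv) − uv‖ ≤ (‖φ(u) − u‖^{1/2} + ‖φ(v) − v‖^{1/2})². -/

import Mathlib

/-- A square matrix over a C*-algebra is positive if it has the form `xᴴ * x`. -/
def MatIsPos {n : ℕ} {A : Type*} [NonUnitalNonAssocSemiring A] [Star A]
    (M : Matrix (Fin n) (Fin n) A) : Prop :=
  ∃ x : Matrix (Fin n) (Fin n) A, M = x.conjTranspose * x

/-- `φ` is completely positive: every matrix amplification preserves positivity. -/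
def IsCompletelyPositive {A B : Type*} [NonUnitalNonAssocSemiring A] [Star A]
    [NonUnitalNonAssocSemiring B] [Star B] [Module ℂ A] [Module ℂ B] (φ : A →ₗ[ℂ] B) : Prop :=
  ∀ (n : ℕ) (M : Matrix (Fin n) (Fin n) A), MatIsPos M → MatIsPos (M.map φ)

/-- Cauchy–Schwarz for finite sums in a C*-algebra. -/
lemma cs_sum {B : Type*} [CStarAlgebra B] {n : ℕ} (a b : Fin n → B) :
    ‖∑ k, star (a k) * b k‖^2 ≤ ‖∑ k, star (a k) * a k‖ * ‖∑ k, star (b k) * b k‖ := by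
  letI := CStarAlgebra.spectralOrder B
  haveI := CStarAlgebra.spectralOrderedRing B
  set S := ∑ k, star (a k) * a k with hSdef
  set T := ∑ k, star (b k) * b k with hTdef
  set r := ∑ k, star (a k) * b k with hrdef
  have hS : (0:B) ≤ S := Finset.sum_nonneg fun k _ => star_mul_self_nonneg _
  have hT : (0:B) ≤ T := Finset.sum_nonneg fun k _ => star_mul_self_nonneg _
  by_cases hs0 : ‖S‖ = 0
  · have hSz : S = 0 := norm_eq_zero.mp hs0
    have hak : ∀ k, a k = 0 := by
      intro k
      have h1 : star (a k) * a k ≤ S := by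
        rw [hSdef]
        exact Finset.single_le_sum (f := fun k => star (a k) * a k)
          (fun i _ => star_mul_self_nonneg _) (Finset.mem_univ k)
      have h2 : ‖star (a k) * a k‖ ≤ ‖S‖ :=
        CStarAlgebra.norm_le_norm_of_nonneg_of_le (star_mul_self_nonneg _) h1
      rw [hs0, CStarRing.norm_star_mul_self] at h2
      have h3 := norm_nonneg (a k)
      have : ‖a k‖ = 0 := by nlinarith
      exact norm_eq_zero.mp this
    have : r = 0 := by
      rw [hrdef]; exact Finset.sum_eq_zero fun k _ => by rw [hak k]; simp
    simp [this, mul_nonneg (norm_nonneg _) (norm_nonneg _)]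
  · have hs : 0 < ‖S‖ := lt_of_le_of_ne (norm_nonneg _) (Ne.symm hs0)
    set s := ‖S‖ with hsdef
    set c : B := s⁻¹ • r with hcdef
    have hq : (0:B) ≤ ∑ k, star (a k * c - b k) * (a k * c - b k) :=
      Finset.sum_nonneg fun k _ => star_mul_self_nonneg _
    have hexp : ∑ k, star (a k * c - b k) * (a k * c - b k)
        = star c * S * c - star c * r - star r * c + T := by
      have e1 : ∀ k, star (a k * c - b k) * (a k * c - b k)
          = star c * (star (a k) * a k) * c - star (b k) * a k * c
            - star c * (star (a k) * b k) + star (b k) * b k := by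
        intro k; simp only [star_sub, star_mul]; noncomm_ring
      rw [Finset.sum_congr rfl (fun k _ => e1 k), Finset.sum_add_distrib,
        Finset.sum_sub_distrib, Finset.sum_sub_distrib]
      have hA : ∑ k, star c * (star (a k) * a k) * c = star c * S * c := by
        rw [hSdef, ← Finset.sum_mul, ← Finset.mul_sum]
      have hB : ∑ k, star (b k) * a k * c = star r * c := by
        rw [← Finset.sum_mul]
        congr 1
        rw [hrdef, star_sum]
        exact Finset.sum_congr rfl fun k _ => by rw [star_mul, star_star]
      have hC : ∑ k, star c * (star (a k) * b k) = star c * r := by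
        rw [hrdef, ← Finset.mul_sum]
      rw [hA, hB, hC]
      abel
    rw [hexp] at hq
    have hconj : star c * S * c ≤ star c * algebraMap ℝ B s * c :=
      star_left_conjugate_le_conjugate (IsSelfAdjoint.le_algebraMap_norm_self hS.isSelfAdjoint) c
    have hcalc : star c * algebraMap ℝ B s * c = s⁻¹ • (star r * r) := by
      rw [hcdef, Algebra.algebraMap_eq_smul_one]
      simp only [star_smul, star_trivial, smul_mul_assoc, mul_smul_comm, mul_one, smul_smul]
      congr 1
      field_simp
    have hcr : star c * r = s⁻¹ • (star r * r) := by
      rw [hcdef, star_smul, star_trivial, smul_mul_assoc]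
    have hrc : star r * c = s⁻¹ • (star r * r) := by
      rw [hcdef, mul_smul_comm]
    have hkey : s⁻¹ • (star r * r) ≤ T := by
      have h2 : (0:B) ≤ star c * algebraMap ℝ B s * c - star c * r - star r * c + T := by
        calc (0:B) ≤ star c * S * c - star c * r - star r * c + T := hq
          _ ≤ star c * algebraMap ℝ B s * c - star c * r - star r * c + T := by gcongr
      rw [hcalc, hcr, hrc] at h2
      have h3 : (0:B) ≤ T - s⁻¹ • (star r * r) := by
        convert h2 using 1; abel
      exact sub_nonneg.mp h3
    have hpos : (0:B) ≤ s⁻¹ • (star r * r) := by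
      have ht : Real.sqrt s⁻¹ * Real.sqrt s⁻¹ = s⁻¹ := Real.mul_self_sqrt (by positivity)
      have heq : star (Real.sqrt s⁻¹ • r) * (Real.sqrt s⁻¹ • r) = s⁻¹ • (star r * r) := by
        rw [star_smul]
        simp only [star_trivial]
        rw [smul_mul_smul_comm, ht]
      rw [← heq]; exact star_mul_self_nonneg _
    have hnorm : ‖s⁻¹ • (star r * r)‖ ≤ ‖T‖ :=
      CStarAlgebra.norm_le_norm_of_nonneg_of_le hpos hkey
    rw [norm_smul, Real.norm_eq_abs, abs_of_nonneg (by positivity),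
      CStarRing.norm_star_mul_self] at hnorm
    calc ‖r‖^2 = s * (s⁻¹ * (‖r‖ * ‖r‖)) := by field_simp
      _ ≤ s * ‖T‖ := by nlinarith

/-- Extraction of the canonical families from 3×3 complete positivity. -/
lemma triple_extract {B : Type*} [CStarAlgebra B] (A : StarSubalgebra ℂ B)
    (φ : A →ₗ[ℂ] B) (hcp : IsCompletelyPositive φ) (x y : A) :
    ∃ a b c : Fin 3 → B,
      (∑ k, star (a k) * a k) = φ 1 ∧
      (∑ k, star (a k) * b k) = φ x ∧
      (∑ k, star (a k) * c k) = φ y ∧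
      (∑ k, star (b k) * a k) = φ (star x) ∧
      (∑ k, star (b k) * b k) = φ (star x * x) ∧
      (∑ k, star (b k) * c k) = φ (star x * y) ∧
      (∑ k, star (c k) * c k) = φ (star y * y) := by
  set r : Fin 3 → A := ![1, x, y] with hr
  set w : Matrix (Fin 3) (Fin 3) A := Matrix.of (fun i j => if i = 0 then r j else 0) with hw
  obtain ⟨z, hz⟩ := hcp 3 (w.conjTranspose * w) ⟨w, rfl⟩
  have entry : ∀ i j, (w.conjTranspose * w) i j = star (r i) * r j := by
    intro i j
    simp [hw, Matrix.mul_apply, Fin.sum_univ_three, Matrix.conjTranspose_apply]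
  have key : ∀ i j, φ (star (r i) * r j) = ∑ k, star (z k i) * z k j := by
    intro i j
    have h := congrFun (congrFun hz i) j
    rw [Matrix.map_apply, entry] at h
    rw [h, Matrix.mul_apply]
    exact Finset.sum_congr rfl fun k _ => by rw [Matrix.conjTranspose_apply]
  refine ⟨fun k => z k 0, fun k => z k 1, fun k => z k 2, ?_, ?_, ?_, ?_, ?_, ?_, ?_⟩
  · have h := (key 0 0).symm; simpa [hr] using h
  · have h := (key 0 1).symm; simpa [hr] using h
  · have h := (key 0 2).symm; simpa [hr] using h
  · have h := (key 1 0).symm; simpa [hr] using h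
  · have h := (key 1 1).symm; simpa [hr] using h
  · have h := (key 1 2).symm; simpa [hr] using h
  · have h := (key 2 2).symm; simpa [hr] using h

lemma phi_star {B : Type*} [CStarAlgebra B] {A : StarSubalgebra ℂ B}
    {φ : A →ₗ[ℂ] B} (hcp : IsCompletelyPositive φ) (x : A) :
    φ (star x) = star (φ x) := by
  obtain ⟨a, b, c, e00, e01, e02, e10, e11, e12, e22⟩ := triple_extract A φ hcp x x
  rw [← e10, ← e01, star_sum]
  exact Finset.sum_congr rfl fun k _ => by rw [star_mul, star_star]

lemma shift_sum {B : Type*} [CStarAlgebra B] {n : ℕ} (a b c : Fin n → B) (p q : B) :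
    ∑ k, star (b k - a k * p) * (c k - a k * q)
      = (∑ k, star (b k) * c k) - (∑ k, star (b k) * a k) * q
        - star p * (∑ k, star (a k) * c k) + star p * (∑ k, star (a k) * a k) * q := by
  have e1 : ∀ k, star (b k - a k * p) * (c k - a k * q)
      = star (b k) * c k - star (b k) * a k * q
        - star p * (star (a k) * c k) + star p * (star (a k) * a k) * q := by
    intro k; simp only [star_sub, star_mul]; noncomm_ring
  rw [Finset.sum_congr rfl (fun k _ => e1 k), Finset.sum_add_distrib,
    Finset.sum_sub_distrib, Finset.sum_sub_distrib]
  have hA : ∑ k, star (b k) * a k * q = (∑ k, star (b k) * a k) * q := by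
    rw [← Finset.sum_mul]
  have hB : ∑ k, star p * (star (a k) * c k) = star p * ∑ k, star (a k) * c k := by
    rw [← Finset.mul_sum]
  have hC : ∑ k, star p * (star (a k) * a k) * q = star p * (∑ k, star (a k) * a k) * q := by
    rw [← Finset.sum_mul, ← Finset.mul_sum]
  rw [hA, hB, hC]

/-- The Schwarz-type inequality for unital completely positive maps. -/
lemma schwarz_ineq {B : Type*} [CStarAlgebra B] (A : StarSubalgebra ℂ B)
    (φ : A →ₗ[ℂ] B) (hunit : φ 1 = 1) (hcp : IsCompletelyPositive φ) (x y : A) :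
    ‖φ (star x * y) - star (φ x) * φ y‖^2
      ≤ ‖φ (star x * x) - star (φ x) * φ x‖ * ‖φ (star y * y) - star (φ y) * φ y‖ := by
  obtain ⟨a, b, c, e00, e01, e02, e10, e11, e12, e22⟩ := triple_extract A φ hcp x y
  rw [hunit] at e00
  have hstar : (∑ k, star (b k) * a k) = star (φ x) := by
    rw [e10, phi_star hcp]
  set b' : Fin 3 → B := fun k => b k - a k * φ x with hb'
  set c' : Fin 3 → B := fun k => c k - a k * φ y with hc'
  have h1 : ∑ k, star (b' k) * c' k = φ (star x * y) - star (φ x) * φ y := by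
    rw [hb', hc', shift_sum, e12, hstar, e02, e00]
    noncomm_ring
  have h2 : ∑ k, star (b' k) * b' k = φ (star x * x) - star (φ x) * φ x := by
    rw [hb', shift_sum, e11, hstar, e01, e00]
    noncomm_ring
  have h3 : ∑ k, star (c' k) * c' k = φ (star y * y) - star (φ y) * φ y := by
    have hstar' : (∑ k, star (c k) * a k) = star (φ y) := by
      rw [← e02, star_sum]
      exact Finset.sum_congr rfl fun k _ => by rw [star_mul, star_star]
    rw [hc', shift_sum, e22, hstar', e02, e00]
    noncomm_ring
  have := cs_sum b' c'
  rwa [h1, h2, h3] at this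

lemma phi_norm_le_one {B : Type*} [CStarAlgebra B] [Nontrivial B] (A : StarSubalgebra ℂ B)
    (φ : A →ₗ[ℂ] B) (hunit : φ 1 = 1) (hcp : IsCompletelyPositive φ) (v : A)
    (hv1 : star v * v = 1) : ‖φ v‖ ≤ 1 := by
  obtain ⟨a, b, c, e00, e01, e02, e10, e11, e12, e22⟩ := triple_extract A φ hcp v v
  have h := cs_sum a b
  rw [e00, e01, e11, hv1, hunit, norm_one, one_mul] at h
  nlinarith [norm_nonneg (φ v)]

set_option maxHeartbeats 1000000 in
/-- If `A ⊆ B` are unital C*-algebras with common unit, `φ : A → B` is unital completely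
positive, and `u, v ∈ A` are unitaries, then
`‖φ(uv) − uv‖ ≤ (‖φ(u) − u‖^{1/2} + ‖φ(v) − v‖^{1/2})²`. -/
theorem stmt7 {B : Type*} [CStarAlgebra B] (A : StarSubalgebra ℂ B)
    (φ : A →ₗ[ℂ] B) (hunit : φ 1 = 1) (hcp : IsCompletelyPositive φ)
    (u v : A) (hu : u ∈ unitary A) (hv : v ∈ unitary A) :
    ‖φ (u * v) - ((u * v : A) : B)‖ ≤
      (Real.sqrt ‖φ u - (u : B)‖ + Real.sqrt ‖φ v - (v : B)‖) ^ 2 := by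
  rcases subsingleton_or_nontrivial B with hB | hB
  · have h0 : φ (u * v) - ((u * v : A) : B) = 0 := Subsingleton.elim _ _
    rw [h0, norm_zero]
    positivity
  -- unitary relations
  obtain ⟨hu1, hu2⟩ := Unitary.mem_iff.mp hu
  obtain ⟨hv1, hv2⟩ := Unitary.mem_iff.mp hv
  set cu : B := (u : B) with hcu
  set cv : B := (v : B) with hcv
  have hcu1 : star cu * cu = 1 := by
    have := congrArg (Subtype.val) hu1; simpa using this
  have hcu2 : cu * star cu = 1 := by
    have := congrArg (Subtype.val) hu2; simpa using this
  have hcv1 : star cv * cv = 1 := by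
    have := congrArg (Subtype.val) hv1; simpa using this
  have hnu : ‖cu‖ = 1 := by
    have h := CStarRing.norm_star_mul_self (x := cu)
    rw [hcu1, norm_one] at h
    nlinarith [norm_nonneg cu]
  have hnv : ‖cv‖ = 1 := by
    have h := CStarRing.norm_star_mul_self (x := cv)
    rw [hcv1, norm_one] at h
    nlinarith [norm_nonneg cv]
  have hfu : ‖φ u‖ ≤ 1 := phi_norm_le_one A φ hunit hcp u hu1
  have hfv : ‖φ v‖ ≤ 1 := phi_norm_le_one A φ hunit hcp v hv1
  set α := ‖φ u - cu‖ with hα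
  set β := ‖φ v - cv‖ with hβ
  have hα0 : 0 ≤ α := norm_nonneg _
  have hβ0 : 0 ≤ β := norm_nonneg _
  -- Schwarz inequality applied to x = star u, y = v
  have hS := schwarz_ineq A φ hunit hcp (star u) v
  rw [star_star] at hS
  have hps : φ (star u) = star (φ u) := phi_star hcp u
  rw [hps, star_star] at hS
  -- u * star u = 1
  rw [hu2, hunit] at hS
  -- first factor bound : ‖1 - φu * star φu‖ ≤ 2α
  have hf1 : ‖(1:B) - φ u * star (φ u)‖ ≤ 2 * α := by
    have hid : (1:B) - φ u * star (φ u)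
        = cu * star (cu - φ u) + (cu - φ u) * star (φ u) := by
      rw [star_sub, ← hcu2]; noncomm_ring
    rw [hid]
    calc ‖cu * star (cu - φ u) + (cu - φ u) * star (φ u)‖
        ≤ ‖cu * star (cu - φ u)‖ + ‖(cu - φ u) * star (φ u)‖ := norm_add_le _ _
      _ ≤ ‖cu‖ * ‖star (cu - φ u)‖ + ‖cu - φ u‖ * ‖star (φ u)‖ := by
          gcongr <;> exact norm_mul_le _ _
      _ = 1 * α + α * ‖φ u‖ := by
          rw [hnu, norm_star, norm_star, norm_sub_rev]
      _ ≤ 2 * α := by nlinarith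
  -- second factor bound : ‖1 - star φv * φv‖ ≤ 2β
  have hf2 : ‖(1:B) - star (φ v) * φ v‖ ≤ 2 * β := by
    have hid : (1:B) - star (φ v) * φ v
        = star cv * (cv - φ v) + star (cv - φ v) * φ v := by
      rw [star_sub, ← hcv1]; noncomm_ring
    rw [hid]
    calc ‖star cv * (cv - φ v) + star (cv - φ v) * φ v‖
        ≤ ‖star cv * (cv - φ v)‖ + ‖star (cv - φ v) * φ v‖ := norm_add_le _ _
      _ ≤ ‖star cv‖ * ‖cv - φ v‖ + ‖star (cv - φ v)‖ * ‖φ v‖ := by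
          gcongr <;> exact norm_mul_le _ _
      _ = 1 * β + β * ‖φ v‖ := by
          rw [norm_star, hnv, norm_star, norm_sub_rev]
      _ ≤ 2 * β := by nlinarith
  -- combine Schwarz
  have hT1sq : ‖φ (u * v) - φ u * φ v‖^2 ≤ (2*α) * (2*β) := by
    calc ‖φ (u * v) - φ u * φ v‖^2
        ≤ ‖(1:B) - φ u * star (φ u)‖ * ‖φ (star v * v) - star (φ v) * φ v‖ := hS
      _ = ‖(1:B) - φ u * star (φ u)‖ * ‖(1:B) - star (φ v) * φ v‖ := by
          rw [hv1, hunit]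
      _ ≤ (2*α) * (2*β) := by
          apply mul_le_mul hf1 hf2 (norm_nonneg _) (by linarith [norm_nonneg ((1:B) - φ u * star (φ u))])
  have hT1 : ‖φ (u * v) - φ u * φ v‖ ≤ 2 * Real.sqrt α * Real.sqrt β := by
    have h1 : ‖φ (u * v) - φ u * φ v‖ = Real.sqrt (‖φ (u * v) - φ u * φ v‖^2) :=
      (Real.sqrt_sq (norm_nonneg _)).symm
    rw [h1]
    have h2 : Real.sqrt ((2*α)*(2*β)) = 2 * Real.sqrt α * Real.sqrt β := by
      rw [show (2*α)*(2*β) = (2 * Real.sqrt α * Real.sqrt β)^2 by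
        have := Real.sq_sqrt hα0
        have := Real.sq_sqrt hβ0
        nlinarith]
      exact Real.sqrt_sq (by positivity)
    rw [← h2]
    exact Real.sqrt_le_sqrt hT1sq
  -- splitting
  have hsplit : φ (u * v) - ((u * v : A) : B)
      = (φ (u * v) - φ u * φ v) + (φ u - cu) * φ v + cu * (φ v - cv) := by
    have : ((u * v : A) : B) = cu * cv := by simp [hcu, hcv]
    rw [this]; noncomm_ring
  have hT2 : ‖(φ u - cu) * φ v‖ ≤ α := by
    calc ‖(φ u - cu) * φ v‖ ≤ ‖φ u - cu‖ * ‖φ v‖ := norm_mul_le _ _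
      _ ≤ α * 1 := by rw [← hα]; exact mul_le_mul_of_nonneg_left hfv hα0
      _ = α := mul_one α
  have hT3 : ‖cu * (φ v - cv)‖ ≤ β := by
    calc ‖cu * (φ v - cv)‖ ≤ ‖cu‖ * ‖φ v - cv‖ := norm_mul_le _ _
      _ = β := by rw [hnu, one_mul]
  have hD : ‖φ (u * v) - ((u * v : A) : B)‖
      ≤ 2 * Real.sqrt α * Real.sqrt β + α + β := by
    rw [hsplit]
    calc ‖(φ (u * v) - φ u * φ v) + (φ u - cu) * φ v + cu * (φ v - cv)‖
        ≤ ‖(φ (u * v) - φ u * φ v) + (φ u - cu) * φ v‖ + ‖cu * (φ v - cv)‖ := norm_add_le _ _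
      _ ≤ ‖φ (u * v) - φ u * φ v‖ + ‖(φ u - cu) * φ v‖ + ‖cu * (φ v - cv)‖ := by
          gcongr; exact norm_add_le _ _
      _ ≤ 2 * Real.sqrt α * Real.sqrt β + α + β := by
          gcongr
  refine hD.trans ?_
  have h1 := Real.sq_sqrt hα0
  have h2 := Real.sq_sqrt hβ0
  nlinarith [Real.sqrt_nonneg α, Real.sqrt_nonneg β]
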